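/- Define G_{1,f}(x) = f(x) + x and G_{k+1,f}(x) = G_{k,f}^{N_{k+1}(x)}(x+1) where N_k(x) = k·(f(x)−1). If f is monotone with f(x) ≥ x for all x, then each G_{k,f} is monotone and satisfies G_{k,f}(x) ≥ x; moreover M_{r×{k}, f}(x) = G_{k,f}^r(x) − x for all r ≥ 1, k ≥ 1, x ≥ 0. -/

import Mathlib

/-- τ⟨k,t⟩ := (τ − {k}) + N_k(t) × {k−1}, where N_k(t) = k·(f(t)−1). -/
def tkt (f : ℕ → ℕ) (τ : Multiset ℕ) (k t : ℕ) : Multiset ℕ :=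
  τ.erase k + Multiset.replicate (k * (f t - 1)) (k - 1)

/-- G_{1,f}(x) = f(x) + x and G_{k+1,f}(x) = G_{k,f}^{N_{k+1}(x)}(x+1),
where N_k(x) = k·(f(x)−1).  (The value at k = 0 is irrelevant.) -/
def G (f : ℕ → ℕ) : ℕ → ℕ → ℕ
  | 0, x => x
  | 1, x => f x + x
  | (k + 2), x => (G f (k + 1))^[(k + 2) * (f x - 1)] (x + 1)

section Aux
variable {f : ℕ → ℕ}

lemma iter_le {g : ℕ → ℕ} (hm : Monotone g) (hid : ∀ x, x ≤ g x) :
    ∀ {m n a b : ℕ}, m ≤ n → a ≤ b → g^[m] a ≤ g^[n] b := by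
  intro m n a b hmn hab
  have h1 : g^[m] a ≤ g^[m] b := hm.iterate m hab
  have h2 : ∀ d, g^[m] b ≤ g^[m + d] b := by
    intro d
    induction d with
    | zero => simp
    | succ d ih =>
      calc g^[m] b ≤ g^[m + d] b := ih
        _ ≤ g (g^[m + d] b) := hid _
        _ = g^[m + (d+1)] b := by rw [show m + (d+1) = (m+d)+1 from rfl, Function.iterate_succ_apply']
  obtain ⟨d, rfl⟩ := Nat.exists_eq_add_of_le hmn
  exact h1.trans (h2 d)

lemma Gmono (hmono : Monotone f) (hf : ∀ x, max 1 x ≤ f x) :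
    ∀ k : ℕ, Monotone (G f (k+1)) ∧ ∀ x : ℕ, x ≤ G f (k+1) x := by
  intro k
  induction k with
  | zero =>
    constructor
    · intro a b hab
      simp only [G]
      exact Nat.add_le_add (hmono hab) hab
    · intro x; simp [G]
  | succ k ih =>
    obtain ⟨ihm, ihid⟩ := ih
    constructor
    · intro a b hab
      simp only [G]
      exact iter_le ihm ihid
        (Nat.mul_le_mul_left _ (Nat.sub_le_sub_right (hmono hab) 1))
        (Nat.add_le_add_right hab 1)
    · intro x
      simp only [G]
      calc x ≤ x + 1 := Nat.le_succ x
        _ ≤ (G f (k+1))^[(k + 2) * (f x - 1)] (x + 1) :=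
          iter_le ihm ihid (Nat.zero_le _) le_rfl

/-- auxiliary step function. -/
def Hf (f : ℕ → ℕ) (k t : ℕ) : ℕ := if k = 0 then t + 1 else G f k t

lemma Hf_id_le (hmono : Monotone f) (hf : ∀ x, max 1 x ≤ f x) (k t : ℕ) :
    t ≤ Hf f k t := by
  cases k with
  | zero => simp [Hf]
  | succ k => simpa [Hf] using (Gmono hmono hf k).2 t

lemma succ_iterate (n x : ℕ) : (fun t => t + 1)^[n] x = x + n := by
  induction n with
  | zero => simp
  | succ n ih => rw [Function.iterate_succ_apply', ih]; ring

lemma HG (hf : ∀ x, max 1 x ≤ f x) (k t : ℕ) :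
    Hf f (k+1) t = (Hf f k)^[(k+1) * (f t - 1)] (t + 1) := by
  cases k with
  | zero =>
    have h1 : 1 ≤ f t := le_trans (le_max_left 1 t) (hf t)
    have e1 : Hf f (0+1) t = f t + t := by simp [Hf, G]
    have e2 : Hf f 0 = fun t => t + 1 := by funext t; simp [Hf]
    rw [e1, e2, succ_iterate]
    omega
  | succ k =>
    simp only [Hf]
    rfl

/-- closed form -/
def Phi (f : ℕ → ℕ) (τ : Multiset ℕ) (t : ℕ) : ℕ :=
  (τ.sort (· ≤ ·)).foldl (fun t k => Hf f k t) t

lemma Phi_zero (t : ℕ) : Phi f 0 t = t := by simp [Phi]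

lemma Phi_cons (τ : Multiset ℕ) (k t : ℕ) (h : ∀ l ∈ τ, k ≤ l) :
    Phi f (k ::ₘ τ) t = Phi f τ (Hf f k t) := by
  unfold Phi
  rw [Multiset.sort_cons _ _ _ h, List.foldl_cons]

lemma Phi_le (hmono : Monotone f) (hf : ∀ x, max 1 x ≤ f x) (τ : Multiset ℕ) (t : ℕ) :
    t ≤ Phi f τ t := by
  unfold Phi
  generalize (τ.sort (· ≤ ·)) = l
  induction l generalizing t with
  | nil => simp
  | cons a l ih =>
    rw [List.foldl_cons]
    exact (Hf_id_le hmono hf a t).trans (ih _)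

lemma Phi_replicate (r k t : ℕ) :
    Phi f (Multiset.replicate r k) t = (Hf f k)^[r] t := by
  induction r generalizing t with
  | zero => simp [Phi]
  | succ r ih =>
    rw [Multiset.replicate_succ, Phi_cons _ _ _ (by
      intro l hl; rw [Multiset.eq_of_mem_replicate hl]), ih,
      ← Function.iterate_succ_apply]

lemma Phi_add_replicate (τ : Multiset ℕ) (n j t : ℕ) (h : ∀ l ∈ τ, j ≤ l) :
    Phi f (τ + Multiset.replicate n j) t = Phi f τ ((Hf f j)^[n] t) := by
  induction n generalizing t with
  | zero => simp
  | succ n ih =>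
    have : τ + Multiset.replicate (n+1) j = j ::ₘ (τ + Multiset.replicate n j) := by
      rw [Multiset.replicate_succ]
      simp [add_comm, Multiset.cons_add]
    rw [this, Phi_cons _ _ _ (by
        intro l hl
        rcases Multiset.mem_add.1 hl with h1 | h1
        · exact h l h1
        · rw [Multiset.eq_of_mem_replicate h1]), ih,
      ← Function.iterate_succ_apply]

end Aux

section Main
variable {f : ℕ → ℕ}

lemma exists_min (τ : Multiset ℕ) (h0 : τ ≠ 0) : ∃ k, k ∈ τ ∧ ∀ l ∈ τ, k ≤ l := by
  rcases e : τ.sort (· ≤ ·) with _ | ⟨a, l⟩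
  · exfalso
    apply h0
    have := Multiset.sort_eq τ (· ≤ ·)
    rw [e] at this
    simpa using this.symm
  · have hsorted : List.Pairwise (· ≤ ·) (a :: l) := by
      rw [← e]; exact Multiset.pairwise_sort _ _
    refine ⟨a, ?_, ?_⟩
    · rw [← Multiset.mem_sort (· ≤ ·), e]; exact List.mem_cons_self
    · intro x hx
      rw [← Multiset.mem_sort (· ≤ ·), e] at hx
      rcases List.mem_cons.1 hx with rfl | hx
      · exact le_rfl
      · exact List.rel_of_pairwise_cons hsorted hx

lemma M_eq (hmono : Monotone f) (hf : ∀ x, max 1 x ≤ f x)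
    (M : Multiset ℕ → ℕ → ℕ)
    (hM0 : ∀ t, M 0 t = 0)
    (hMrec : ∀ τ : Multiset ℕ, τ ≠ 0 → ∀ t, ∀ k : ℕ,
      (k ∈ τ ∧ ∀ l ∈ τ, k ≤ l) → M τ t = 1 + M (tkt f τ k t) (t + 1)) :
    ∀ τ t, M τ t = Phi f τ t - t := by
  have wf : WellFounded (Relation.CutExpand (· < · : ℕ → ℕ → Prop)) :=
    WellFounded.cutExpand (Nat.lt_wfRel.wf)
  refine fun τ => wf.induction (C := fun τ => ∀ t, M τ t = Phi f τ t - t) τ ?_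
  intro τ ih t
  by_cases h0 : τ = 0
  · subst h0; simp [hM0, Phi_zero]
  · obtain ⟨k, hk, hmin⟩ := exists_min τ h0
    set N := k * (f t - 1) with hN
    have herase : ∀ l ∈ τ.erase k, k ≤ l := fun l hl => hmin l (Multiset.mem_of_mem_erase hl)
    have hstep : Relation.CutExpand (· < · : ℕ → ℕ → Prop) (tkt f τ k t) τ := by
      refine ⟨Multiset.replicate N (k - 1), k, ?_, ?_⟩
      · intro x hx
        rcases k with _ | j
        · simp [hN] at hx
        · rw [Multiset.eq_of_mem_replicate hx]; omega
      · rw [tkt, add_right_comm]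
        congr 1
        rw [add_comm, Multiset.singleton_add, Multiset.cons_erase hk]
    have key : Phi f (tkt f τ k t) (t + 1) = Phi f τ t := by
      have h1 : Phi f τ t = Phi f (τ.erase k) (Hf f k t) := by
        conv_lhs => rw [← Multiset.cons_erase hk]
        exact Phi_cons _ _ _ herase
      have h2 : Phi f (tkt f τ k t) (t + 1)
          = Phi f (τ.erase k) ((Hf f (k - 1))^[N] (t + 1)) := by
        rw [tkt]
        exact Phi_add_replicate _ _ _ _ (fun l hl => le_trans (Nat.sub_le k 1) (herase l hl))
      rw [h1, h2]
      rcases k with _ | j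
      · simp [hN, Hf]
      · rw [show j + 1 - 1 = j from rfl, ← HG hf j t]
    have hrec := hMrec τ h0 t k ⟨hk, hmin⟩
    have hih := ih (tkt f τ k t) hstep (t + 1)
    have hle : t + 1 ≤ Phi f (tkt f τ k t) (t + 1) := Phi_le hmono hf _ _
    rw [hrec, hih, ← key]
    omega

end Main

/-- If f is monotone with f(x) ≥ max(1,x) for all x, then each G_{k,f} (k ≥ 1)
is monotone and satisfies G_{k,f}(x) ≥ x; moreover
M_{r×{k},f}(x) = G_{k,f}^r(x) − x for all r, k ≥ 1 and x ≥ 0, where M is the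
bounding function defined by M_∅(t) = 0, M_τ(t) = 1 + M_{τ⟨min τ,t⟩}(t+1). -/
theorem G_properties_and_M (f : ℕ → ℕ) (hmono : Monotone f)
    (hf : ∀ x, max 1 x ≤ f x)
    (M : Multiset ℕ → ℕ → ℕ)
    (hM0 : ∀ t, M 0 t = 0)
    (hMrec : ∀ τ : Multiset ℕ, τ ≠ 0 → ∀ t, ∀ k : ℕ,
      (k ∈ τ ∧ ∀ l ∈ τ, k ≤ l) → M τ t = 1 + M (tkt f τ k t) (t + 1)) :
    (∀ k : ℕ, 1 ≤ k → Monotone (G f k) ∧ ∀ x : ℕ, x ≤ G f k x) ∧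
    (∀ r k x : ℕ, 1 ≤ r → 1 ≤ k →
      M (Multiset.replicate r k) x = (G f k)^[r] x - x) := by
  constructor
  · intro k hk
    obtain ⟨j, rfl⟩ := Nat.exists_eq_add_of_le hk
    rw [add_comm]
    exact Gmono hmono hf j
  · intro r k x _ hk
    have hHG : Hf f k = G f k := by
      funext t
      simp [Hf, show k ≠ 0 by omega]
    rw [M_eq hmono hf M hM0 hMrec, Phi_replicate, hHG]
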